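/- arXiv:2109.03717 — 2 statements merged into one kernel-verified Lean document; each statement's English description precedes it below -/
import Mathlib

section
/- Let abc be a nondegenerate triangle in the Euclidean plane with an affine linear function f satisfying f(a) < f(b) < f(c) and ∇f not parallel to any edge. If all interior angles of the triangle are strictly less than π/2 (the triangle is acute), then the edge bc has an out-flow: −∇f points into the interior of the triangle from interior points of bc. -/
/-! The edge `bc` lies in the zero set of the barycentric coordinate `λₐ` of `a`, so the flow
enters the triangle from `bc` as soon as `λₐ` increases along `-∇f`. The gradient of `λₐ` is
a positive multiple of the inward normal `w` to `bc`, the component of `a - b` orthogonal to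
`c - b`. Its foot `p = a - w` lies on the ray from `b` through `c` because the angle at `b` is
acute, so `f p > f b > f a`, i.e. `⟪∇f, w⟫ = f a - f p < 0`. -/

open EuclideanGeometry Real Set

/-- The edge `e` (a relatively open segment) of the region `P` has an *out-flow* for the
(constant) negative gradient field `-g`: from points of `e`, flowing along `-g` for small
positive time one enters the interior of `P`. -/
def HasOutFlow (P : Set (EuclideanSpace ℝ (Fin 2))) (g : EuclideanSpace ℝ (Fin 2))
    (e : Set (EuclideanSpace ℝ (Fin 2))) : Prop :=
  ∀ x ∈ e, ∀ᶠ t in nhdsWithin (0 : ℝ) (Set.Ioi 0), x + t • (-g) ∈ interior P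

open scoped RealInnerProductSpace
open Filter Topology

theorem InnerProductGeometry.inner_pos_of_angle_lt_pi_div_two {V : Type*}
    [NormedAddCommGroup V] [InnerProductSpace ℝ V] {x y : V}
    (h : InnerProductGeometry.angle x y < π / 2) : 0 < ⟪x, y⟫ := by
  rcases div_pos_iff.mp (Real.arccos_lt_pi_div_two.mp h) with ⟨hpos, -⟩ | ⟨-, hneg⟩
  · exact hpos
  · exact absurd hneg (by positivity : (0 : ℝ) ≤ ‖x‖ * ‖y‖).not_gt

theorem exists_inner_eq_zero_inner_neg {V : Type*} [NormedAddCommGroup V]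
    [InnerProductSpace ℝ V] {u v g : V} (huv : 0 < ⟪u, v⟫) (hgu : ⟪g, u⟫ < 0)
    (hgv : 0 < ⟪g, v⟫) : ∃ w : V, ⟪w, v⟫ = 0 ∧ 0 ≤ ⟪w, u⟫ ∧ ⟪w, g⟫ < 0 := by
  have hvv : 0 < ⟪v, v⟫ := real_inner_self_pos.mpr (by rintro rfl; simp at huv)
  set s := ⟪u, v⟫ / ⟪v, v⟫
  have hwv : ⟪u - s • v, v⟫ = 0 := by
    rw [inner_sub_left, real_inner_smul_left, div_mul_cancel₀ _ hvv.ne', sub_self]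
  refine ⟨u - s • v, hwv, ?_, ?_⟩
  · calc 0 ≤ ⟪u - s • v, u - s • v⟫ := real_inner_self_nonneg
      _ = ⟪u - s • v, u⟫ := by
        rw [inner_sub_right, real_inner_smul_right, hwv, mul_zero, sub_zero]
  · have hs : 0 < s := div_pos huv hvv
    rw [inner_sub_left, real_inner_smul_left, real_inner_comm g, real_inner_comm g]
    nlinarith

theorem AffineIndependent.exists_affineBasis_eq {k V P ι : Type*} [DivisionRing k]
    [AddCommGroup V] [Module k V] [AddTorsor V P] [FiniteDimensional k V] [Fintype ι]
    {p : ι → P} (hp : AffineIndependent k p) (hcard : Fintype.card ι = Module.finrank k V + 1) :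
    ∃ B : AffineBasis ι k P, ⇑B = p :=
  ⟨⟨p, hp, hp.affineSpan_eq_top_iff_card_eq_finrank_add_one.mpr hcard⟩, rfl⟩

namespace AffineBasis

variable {ι V : Type*}

theorem coord_add_smul [AddCommGroup V] [Module ℝ V] (B : AffineBasis ι ℝ V) (i : ι)
    (x d : V) (t : ℝ) : B.coord i (x + t • d) = B.coord i x + t * (B.coord i).linear d := by
  rw [add_comm x, ← vadd_eq_add (t • d) x, AffineMap.map_vadd, LinearMap.map_smul, vadd_eq_add,
    smul_eq_mul, add_comm]

theorem eventually_add_smul_mem_interior_convexHull [Finite ι] [NormedAddCommGroup V]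
    [NormedSpace ℝ V] (B : AffineBasis ι ℝ V) {x d : V}
    (h : ∀ i, 0 < B.coord i x ∨ (B.coord i x = 0 ∧ 0 < (B.coord i).linear d)) :
    ∀ᶠ t in 𝓝[>] (0 : ℝ), x + t • d ∈ interior (convexHull ℝ (range B)) := by
  simp only [B.interior_convexHull, mem_ofPred_eq, B.coord_add_smul, eventually_all]
  intro i
  rcases h i with hx | ⟨hx, hd⟩
  · have hcont : Continuous fun t : ℝ => B.coord i x + t * (B.coord i).linear d := by fun_prop
    exact (hcont.tendsto' 0 _ (by simp)).eventually_const_lt hx |>.filter_mono nhdsWithin_le_nhds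
  · filter_upwards [self_mem_nhdsWithin] with t ht
    rw [hx, zero_add]
    exact mul_pos ht hd

theorem eventually_lineMap_add_smul_mem_interior_convexHull [Finite ι] [NormedAddCommGroup V]
    [NormedSpace ℝ V] (B : AffineBasis ι ℝ V) {j k : ι} (hjk : j ≠ k) {u : ℝ}
    (hu : u ∈ Ioo 0 1) {d : V} (hd : ∀ i, i ≠ j → i ≠ k → 0 < (B.coord i).linear d) :
    ∀ᶠ t in 𝓝[>] (0 : ℝ),
      AffineMap.lineMap (B j) (B k) u + t • d ∈ interior (convexHull ℝ (range B)) := by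
  refine B.eventually_add_smul_mem_interior_convexHull fun i => ?_
  rw [AffineMap.apply_lineMap]
  rcases eq_or_ne i j with rfl | hij
  · rw [B.coord_apply_eq, B.coord_apply_ne hjk, AffineMap.lineMap_apply_ring]
    exact Or.inl (by linarith [hu.2])
  rcases eq_or_ne i k with rfl | hik
  · rw [B.coord_apply_eq, B.coord_apply_ne hij, AffineMap.lineMap_apply_ring]
    exact Or.inl (by linarith [hu.1])
  · rw [B.coord_apply_ne hij, B.coord_apply_ne hik, AffineMap.lineMap_same_apply]
    exact Or.inr ⟨rfl, hd i hij hik⟩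

theorem inner_eq_inner_mul_coord_linear [Fintype ι] [NormedAddCommGroup V]
    [InnerProductSpace ℝ V] (B : AffineBasis ι ℝ V) {i : ι} {w q : V}
    (hw : ∀ j ≠ i, ⟪w, B j - q⟫ = 0) (d : V) :
    ⟪w, d⟫ = ⟪w, B i - q⟫ * (B.coord i).linear d := by
  have key : ∀ y, ⟪w, y - q⟫ = ⟪w, B i - q⟫ * B.coord i y := by
    intro y
    calc ⟪w, y - q⟫ = ⟪w, ∑ j, B.coord j y • (B j - q)⟫ := by
          simp only [smul_sub, Finset.sum_sub_distrib, ← Finset.sum_smul,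
            B.sum_coord_apply_eq_one, one_smul, B.linear_combination_coord_eq_self]
      _ = ∑ j, B.coord j y * ⟪w, B j - q⟫ := by
          simp only [inner_sum, real_inner_smul_right]
      _ = ⟪w, B i - q⟫ * B.coord i y := by
          rw [Finset.sum_eq_single i (fun j _ hj => by rw [hw j hj, mul_zero]) (by simp), mul_comm]
  have hd := key (q + (1 : ℝ) • d)
  have hq := key q
  rw [B.coord_add_smul, add_sub_cancel_left, one_smul, one_mul, mul_add] at hd
  rw [sub_self, inner_zero_right] at hq
  rw [hd, ← hq, zero_add]

theorem coord_linear_pos_of_inner_pos [Fintype ι] [NormedAddCommGroup V]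
    [InnerProductSpace ℝ V] (B : AffineBasis ι ℝ V) {i : ι} {w q d : V}
    (hw : ∀ j ≠ i, ⟪w, B j - q⟫ = 0) (hi : 0 ≤ ⟪w, B i - q⟫) (hd : 0 < ⟪w, d⟫) :
    0 < (B.coord i).linear d :=
  pos_of_mul_pos_right (B.inner_eq_inner_mul_coord_linear hw d ▸ hd) hi

end AffineBasis

theorem stmt5_general (a b c g : EuclideanSpace ℝ (Fin 2)) (c₀ : ℝ)
    (f : EuclideanSpace ℝ (Fin 2) → ℝ)
    (hf : ∀ x, f x = inner ℝ g x + c₀)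
    (hnd : AffineIndependent ℝ ![a, b, c])
    (hfab : f a < f b) (hfbc : f b < f c)
    (hacute : ∠ b a c < π / 2 ∧ ∠ a b c < π / 2 ∧ ∠ a c b < π / 2) :
    HasOutFlow (convexHull ℝ {a, b, c}) g (openSegment ℝ b c) := by
  obtain ⟨-, hB, -⟩ := hacute
  rw [EuclideanGeometry.angle, vsub_eq_sub, vsub_eq_sub] at hB
  have hf_sub (x y) : ⟪g, x - y⟫ = f x - f y := by rw [hf, hf, inner_sub_right]; ring
  obtain ⟨w, hwv, hwu, hwg⟩ := exists_inner_eq_zero_inner_neg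
    (InnerProductGeometry.inner_pos_of_angle_lt_pi_div_two hB)
    (by rw [hf_sub]; linarith) (by rw [hf_sub]; linarith)
  obtain ⟨T, hT⟩ := hnd.exists_affineBasis_eq (by simp)
  have hinward : 0 < (T.coord 0).linear (-g) := by
    refine T.coord_linear_pos_of_inner_pos (q := b) (fun j hj => ?_) (by simpa [hT]) (by simpa)
    fin_cases j
    exacts [absurd rfl hj, by simp [hT], by simpa [hT]]
  intro x hx
  rw [openSegment_eq_image_lineMap] at hx
  obtain ⟨u, hu, rfl⟩ := hx
  have hrange : range T = {a, b, c} := by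
    rw [hT, Matrix.range_cons, Matrix.range_cons_cons_empty, singleton_union]
  have hbc : b = T 1 ∧ c = T 2 := by simp [hT]
  rw [← hrange, hbc.1, hbc.2]
  refine T.eventually_lineMap_add_smul_mem_interior_convexHull (by decide) hu fun i h1 h2 => ?_
  fin_cases i
  exacts [hinward, absurd rfl h1, absurd rfl h2]

/-- For a nondegenerate triangle `abc` in the Euclidean plane and an affine
linear function `f` with gradient `g ≠ 0`, `f(a) < f(b) < f(c)`, gradient not parallel to
any edge: if the triangle is acute (all interior angles `< π/2`), then the edge `bc` has
an out-flow: `-g` points into the interior of the triangle from interior points of `bc`. -/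
theorem stmt5 (a b c g : EuclideanSpace ℝ (Fin 2)) (c₀ : ℝ)
    (f : EuclideanSpace ℝ (Fin 2) → ℝ)
    (hf : ∀ x, f x = inner ℝ g x + c₀)
    (hg : g ≠ 0)
    (hnd : AffineIndependent ℝ ![a, b, c])
    (hfab : f a < f b) (hfbc : f b < f c)
    (hpar_ab : ∀ t : ℝ, g ≠ t • (b - a))
    (hpar_bc : ∀ t : ℝ, g ≠ t • (c - b))
    (hpar_ac : ∀ t : ℝ, g ≠ t • (c - a))
    (hacute : ∠ b a c < π / 2 ∧ ∠ a b c < π / 2 ∧ ∠ a c b < π / 2) :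
    HasOutFlow (convexHull ℝ {a, b, c}) g (openSegment ℝ b c) :=
  stmt5_general a b c g c₀ f hf hnd hfab hfbc hacute
end

section
/- Every generic discrete Morse function F on a finite regular cell complex X can be modified to a tame generic discrete Morse function F̃ with the same set of critical cells. Moreover F̃ can be chosen to agree with F except on cells β appearing in pairs violating tameness, where only the values F(β) are changed. -/
/-- A finite regular cell complex, modeled combinatorially as a finite graded poset of
cells: `face α β` means `α` is a (proper, iterated) face of `β`.  Regularity provides the
diamond property (between a cell and a codimension-two face there are at least two
intermediate cells) and existence of intermediate cells in any interval. -/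
structure RegularCellComplex where
  Cell : Type
  [fintypeCell : Fintype Cell]
  [decEqCell : DecidableEq Cell]
  face : Cell → Cell → Prop
  dim : Cell → ℕ
  face_trans : ∀ {α β γ}, face α β → face β γ → face α γ
  face_dim : ∀ {α β}, face α β → dim α < dim β
  diamond : ∀ {α β}, face α β → dim β = dim α + 2 →
    ∃ δ₁ δ₂, δ₁ ≠ δ₂ ∧ dim δ₁ = dim α + 1 ∧ dim δ₂ = dim α + 1 ∧
      face α δ₁ ∧ face δ₁ β ∧ face α δ₂ ∧ face δ₂ β
  interval : ∀ {α β}, face α β → dim α + 2 ≤ dim β →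
    ∃ δ, dim δ = dim α + 1 ∧ face α δ ∧ face δ β

attribute [instance] RegularCellComplex.fintypeCell RegularCellComplex.decEqCell

/-- `F` is a discrete Morse function (Forman): for each cell there is at most one
coface of dimension one higher with value `≤`, and at most one face of dimension one
lower with value `≥`. -/
def IsDiscreteMorse (X : RegularCellComplex) (F : X.Cell → ℝ) : Prop :=
  ∀ α : X.Cell,
    {β | X.face α β ∧ X.dim β = X.dim α + 1 ∧ F β ≤ F α}.Subsingleton ∧
    {γ | X.face γ α ∧ X.dim γ + 1 = X.dim α ∧ F α ≤ F γ}.Subsingleton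

/-- `F` is generic: distinct values on incident cells. -/
def IsGeneric (X : RegularCellComplex) (F : X.Cell → ℝ) : Prop :=
  ∀ {α β : X.Cell}, X.face α β → F α ≠ F β

/-- `F` is tame: faces of codimension at least two have strictly smaller value. -/
def IsTame (X : RegularCellComplex) (F : X.Cell → ℝ) : Prop :=
  ∀ {α β : X.Cell}, X.face α β → X.dim α + 2 ≤ X.dim β → F α < F β

/-- A cell `α` is critical for `F`: no exceptional coface and no exceptional face. -/
def IsCritical (X : RegularCellComplex) (F : X.Cell → ℝ) (α : X.Cell) : Prop :=
  (¬ ∃ β, X.face α β ∧ X.dim β = X.dim α + 1 ∧ F β ≤ F α) ∧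
  (¬ ∃ γ, X.face γ α ∧ X.dim γ + 1 = X.dim α ∧ F α ≤ F γ)

/-!
A cell `β` can violate tameness only if it is paired with a facet `δ` (so `F β < F δ`)
whose value dominates every face of `β`: the diamond property together with the Morse
condition produces such a facet above any codimension-two face, and uniqueness of the
pairing makes it the same facet for all of them. Replacing `F β` by `F δ - η`, with `η`
smaller than every positive gap between values of `F`, puts `β` above all its proper faces
except `δ` and below `δ`, and this changes no comparison between a cell and its facets.
-/

open Filter Topology

theorem exists_pos_add_lt_of_lt {ι : Type*} [Finite ι] (f : ι → ℝ) :
    ∃ η > 0, ∀ i j, f i < f j → f i + η < f j := by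
  have hev : ∀ᶠ η in 𝓝 (0 : ℝ), ∀ i j, f i < f j → f i + η < f j := by
    refine eventually_all.2 fun i => eventually_all.2 fun j => ?_
    by_cases h : f i < f j
    · filter_upwards [eventually_lt_nhds (sub_pos.2 h)] with η hη _
      linarith
    · exact Eventually.of_forall fun _ h' => absurd h' h
  obtain ⟨η, hη, hpos⟩ :=
    ((hev.filter_mono nhdsWithin_le_nhds).and (self_mem_nhdsWithin (s := Set.Ioi 0))).exists
  exact ⟨η, hpos, hη⟩

namespace RegularCellComplex

variable {X : RegularCellComplex}

theorem exists_face_dim_eq_add_two {γ τ : X.Cell} (h : X.face γ τ)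
    (hd : X.dim γ + 3 ≤ X.dim τ) :
    ∃ ε, X.face γ ε ∧ X.face ε τ ∧ X.dim ε = X.dim γ + 2 := by
  obtain ⟨ε₁, hd₁, hγε₁, hε₁τ⟩ := X.interval h (by omega)
  obtain ⟨ε, hd, hε₁ε, hετ⟩ := X.interval hε₁τ (by omega)
  exact ⟨ε, X.face_trans hγε₁ hε₁ε, hετ, by omega⟩

def ViolatesTameness (F : X.Cell → ℝ) (β : X.Cell) : Prop :=
  ∃ α, X.face α β ∧ X.dim α + 2 ≤ X.dim β ∧ F β ≤ F α

structure IsDominantFacet (F : X.Cell → ℝ) (δ β : X.Cell) : Prop where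
  face : X.face δ β
  dim_add_one : X.dim δ + 1 = X.dim β
  lt : F β < F δ
  lt_of_face : ∀ x, X.face x β → x ≠ δ → F x < F δ

noncomputable def maxFaceValue (F : X.Cell → ℝ) (β : X.Cell) : ℝ :=
  sSup (F '' {x | X.face x β})

noncomputable def tameModification (F : X.Cell → ℝ) (η : ℝ) (β : X.Cell) : ℝ :=
  open scoped Classical in
  if X.ViolatesTameness F β then X.maxFaceValue F β - η else F β

variable {F : X.Cell → ℝ} {η : ℝ}

theorem lt_of_not_violatesTameness {α β : X.Cell} (hβ : ¬X.ViolatesTameness F β)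
    (hαβ : X.face α β) (hd : X.dim α + 2 ≤ X.dim β) : F α < F β := by
  by_contra! h
  exact hβ ⟨α, hαβ, hd, h⟩

theorem IsDominantFacet.maxFaceValue_eq {δ β : X.Cell} (hδ : X.IsDominantFacet F δ β) :
    X.maxFaceValue F β = F δ := by
  refine IsGreatest.csSup_eq ⟨⟨δ, hδ.face, rfl⟩, ?_⟩
  rintro _ ⟨x, hx, rfl⟩
  by_cases h : x = δ
  · rw [h]
  · exact (hδ.lt_of_face x hx h).le

theorem tameModification_of_not_violatesTameness {β : X.Cell}
    (hβ : ¬X.ViolatesTameness F β) : X.tameModification F η β = F β := by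
  simp only [tameModification, hβ, if_false]

theorem tameModification_of_isDominantFacet {δ β : X.Cell} (hβ : X.ViolatesTameness F β)
    (hδ : X.IsDominantFacet F δ β) : X.tameModification F η β = F δ - η := by
  simp only [tameModification, hβ, if_true, hδ.maxFaceValue_eq]

theorem isDiscreteMorse_of_facet_le_iff {G : X.Cell → ℝ}
    (h : ∀ {β τ : X.Cell}, X.face β τ → X.dim β + 1 = X.dim τ → (G τ ≤ G β ↔ F τ ≤ F β))
    (hF : IsDiscreteMorse X F) : IsDiscreteMorse X G := by
  intro α
  have hup : {β | X.face α β ∧ X.dim β = X.dim α + 1 ∧ G β ≤ G α} =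
      {β | X.face α β ∧ X.dim β = X.dim α + 1 ∧ F β ≤ F α} :=
    Set.ext fun _ => and_congr_right fun hαβ => and_congr_right fun hd => h hαβ hd.symm
  have hdown : {γ | X.face γ α ∧ X.dim γ + 1 = X.dim α ∧ G α ≤ G γ} =
      {γ | X.face γ α ∧ X.dim γ + 1 = X.dim α ∧ F α ≤ F γ} :=
    Set.ext fun _ => and_congr_right fun hγα => and_congr_right fun hd => h hγα hd
  rw [hup, hdown]
  exact hF α

theorem isCritical_iff_of_facet_le_iff {G : X.Cell → ℝ}
    (h : ∀ {β τ : X.Cell}, X.face β τ → X.dim β + 1 = X.dim τ → (G τ ≤ G β ↔ F τ ≤ F β))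
    (α : X.Cell) : IsCritical X G α ↔ IsCritical X F α :=
  and_congr
    (not_congr (exists_congr fun _ => and_congr_right fun hαβ => and_congr_right fun hd =>
      h hαβ hd.symm))
    (not_congr (exists_congr fun _ => and_congr_right fun hγα => and_congr_right fun hd =>
      h hγα hd))

end RegularCellComplex

namespace IsDiscreteMorse

variable {X : RegularCellComplex} {F : X.Cell → ℝ}

theorem exists_lt_of_dim_eq_add_two (hF : IsDiscreteMorse X F) {γ τ : X.Cell}
    (h : X.face γ τ) (hd : X.dim τ = X.dim γ + 2) :
    ∃ δ, X.face γ δ ∧ X.face δ τ ∧ X.dim δ = X.dim γ + 1 ∧ F γ < F δ := by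
  obtain ⟨δ₁, δ₂, hne, hd₁, hd₂, hγδ₁, hδ₁τ, hγδ₂, hδ₂τ⟩ := X.diamond h hd
  by_cases h₁ : F δ₁ ≤ F γ
  · by_cases h₂ : F δ₂ ≤ F γ
    · exact absurd ((hF γ).1 ⟨hγδ₁, hd₁, h₁⟩ ⟨hγδ₂, hd₂, h₂⟩) hne
    · exact ⟨δ₂, hγδ₂, hδ₂τ, hd₂, lt_of_not_ge h₂⟩
  · exact ⟨δ₁, hγδ₁, hδ₁τ, hd₁, lt_of_not_ge h₁⟩

theorem exists_facet_lt (hF : IsDiscreteMorse X F) {γ τ : X.Cell} (h : X.face γ τ)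
    (hd : X.dim γ + 2 ≤ X.dim τ) :
    ∃ δ, X.face γ δ ∧ X.face δ τ ∧ X.dim δ + 1 = X.dim τ ∧ F γ < F δ := by
  induction hk : X.dim τ - X.dim γ using Nat.strong_induction_on generalizing γ with
  | _ k ih =>
    rcases (show X.dim τ = X.dim γ + 2 ∨ X.dim γ + 3 ≤ X.dim τ by omega) with h₂ | h₃
    · obtain ⟨δ, hγδ, hδτ, hδd, hlt⟩ := hF.exists_lt_of_dim_eq_add_two h h₂
      exact ⟨δ, hγδ, hδτ, by omega, hlt⟩
    · obtain ⟨ε, hγε, hετ, hεd⟩ := X.exists_face_dim_eq_add_two h h₃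
      obtain ⟨δ₁, hγδ₁, hδ₁ε, hδ₁d, hlt₁⟩ := hF.exists_lt_of_dim_eq_add_two hγε hεd
      obtain ⟨δ, hδ₁δ, hδτ, hδd, hlt⟩ :=
        ih _ (by omega) (X.face_trans hδ₁ε hετ) (by omega) rfl
      exact ⟨δ, X.face_trans hγδ₁ hδ₁δ, hδτ, hδd, hlt₁.trans hlt⟩

theorem exists_isDominantFacet (hF : IsDiscreteMorse X F) {β : X.Cell}
    (hβ : X.ViolatesTameness F β) : ∃ δ, X.IsDominantFacet F δ β := by
  obtain ⟨γ, hγβ, hγd, hβγ⟩ := hβ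
  obtain ⟨δ, -, hδβ, hδd, hγδ⟩ := hF.exists_facet_lt hγβ hγd
  have hβδ : F β < F δ := hβγ.trans_lt hγδ
  refine ⟨δ, hδβ, hδd, hβδ, fun x hxβ hxδ => ?_⟩
  by_contra! hδx
  have hβx : F β ≤ F x := hβδ.le.trans hδx
  rcases (show X.dim x + 1 = X.dim β ∨ X.dim x + 2 ≤ X.dim β by
      have := X.face_dim hxβ; omega) with hx | hx
  · exact hxδ ((hF β).2 ⟨hxβ, hx, hβx⟩ ⟨hδβ, hδd, hβδ.le⟩)
  · obtain ⟨δ', -, hδ'β, hδ'd, hxδ'⟩ := hF.exists_facet_lt hxβ hx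
    obtain rfl : δ' = δ := (hF β).2 ⟨hδ'β, hδ'd, (hβx.trans_lt hxδ').le⟩ ⟨hδβ, hδd, hβδ.le⟩
    linarith

end IsDiscreteMorse

namespace RegularCellComplex

variable {X : RegularCellComplex} {F : X.Cell → ℝ} {η : ℝ}

theorem IsDominantFacet.eq_of_le (hF : IsDiscreteMorse X F) {δ β τ : X.Cell}
    (hδ : X.IsDominantFacet F δ τ) (hβτ : X.face β τ) (hd : X.dim β + 1 = X.dim τ)
    (h : F τ ≤ F β) : β = δ :=
  (hF τ).2 ⟨hβτ, hd, h⟩ ⟨hδ.face, hδ.dim_add_one, hδ.lt.le⟩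

theorem IsDominantFacet.not_violatesTameness (hF : IsDiscreteMorse X F) {δ β : X.Cell}
    (hδ : X.IsDominantFacet F δ β) : ¬X.ViolatesTameness F δ := by
  intro hv
  obtain ⟨δ', hδ'δ, hd', hlt, -⟩ := hF.exists_isDominantFacet hv
  have := hδ.lt_of_face δ' (X.face_trans hδ'δ hδ.face) (by rintro rfl; omega)
  linarith

section

variable (hF : IsDiscreteMorse X F) (hη : 0 < η)
  (hgap : ∀ x y, F x < F y → F x + η < F y)

include hF hgap in
theorem tameModification_add_lt {α y : X.Cell} (hα : F α < F y)
    (hfaces : ∀ x, X.face x α → F x < F y) : X.tameModification F η α + η < F y := by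
  by_cases hv : X.ViolatesTameness F α
  · obtain ⟨δ, hδ⟩ := hF.exists_isDominantFacet hv
    rw [tameModification_of_isDominantFacet hv hδ]
    linarith [hfaces δ hδ.face]
  · rw [tameModification_of_not_violatesTameness hv]
    exact hgap _ _ hα

include hF hgap in
theorem tameModification_lt_of_isDominantFacet {α δ β : X.Cell}
    (hβ : X.ViolatesTameness F β) (hδ : X.IsDominantFacet F δ β) (hαβ : X.face α β)
    (hαδ : α ≠ δ) : X.tameModification F η α < X.tameModification F η β := by
  have := tameModification_add_lt hF hgap (hδ.lt_of_face α hαβ hαδ) fun x hxα =>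
    hδ.lt_of_face x (X.face_trans hxα hαβ) (by
      rintro rfl; have := X.face_dim hxα; have := X.face_dim hαβ; have := hδ.dim_add_one; omega)
  rw [tameModification_of_isDominantFacet hβ hδ]
  linarith

include hF hη hgap in
theorem tameModification_lt_of_not_violatesTameness {α β : X.Cell}
    (hβ : ¬X.ViolatesTameness F β) (hαβ : X.face α β) (hlt : F α < F β) :
    X.tameModification F η α < X.tameModification F η β := by
  have := tameModification_add_lt hF hgap hlt fun x hxα =>
    lt_of_not_violatesTameness hβ (X.face_trans hxα hαβ) (by
      have := X.face_dim hxα; have := X.face_dim hαβ; omega)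
  rw [tameModification_of_not_violatesTameness hβ]
  linarith

include hF hη hgap in
theorem isTame_tameModification : IsTame X (X.tameModification F η) := by
  intro α β hαβ hd
  by_cases hβ : X.ViolatesTameness F β
  · obtain ⟨δ, hδ⟩ := hF.exists_isDominantFacet hβ
    exact tameModification_lt_of_isDominantFacet hF hgap hβ hδ hαβ (by
      rintro rfl; have := hδ.dim_add_one; omega)
  · exact tameModification_lt_of_not_violatesTameness hF hη hgap hβ hαβ
      (lt_of_not_violatesTameness hβ hαβ hd)

include hF hη hgap in
theorem tameModification_lt_of_facet_of_lt {β τ : X.Cell} (hβτ : X.face β τ)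
    (hlt : F β < F τ) : X.tameModification F η β < X.tameModification F η τ := by
  by_cases hτ : X.ViolatesTameness F τ
  · obtain ⟨δ, hδ⟩ := hF.exists_isDominantFacet hτ
    exact tameModification_lt_of_isDominantFacet hF hgap hτ hδ hβτ (by
      rintro rfl; exact lt_asymm hlt hδ.lt)
  · exact tameModification_lt_of_not_violatesTameness hF hη hgap hτ hβτ hlt

include hF hη in
theorem tameModification_lt_of_facet_of_gt {β τ : X.Cell} (hβτ : X.face β τ)
    (hd : X.dim β + 1 = X.dim τ) (hlt : F τ < F β) :
    X.tameModification F η τ < X.tameModification F η β := by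
  by_cases hτ : X.ViolatesTameness F τ
  · obtain ⟨δ, hδ⟩ := hF.exists_isDominantFacet hτ
    obtain rfl : β = δ := hδ.eq_of_le hF hβτ hd hlt.le
    rw [tameModification_of_isDominantFacet hτ hδ,
      tameModification_of_not_violatesTameness (hδ.not_violatesTameness hF)]
    linarith
  · have hβ : ¬X.ViolatesTameness F β := by
      intro hβ
      obtain ⟨δ, hδ⟩ := hF.exists_isDominantFacet hβ
      exact hτ ⟨δ, X.face_trans hδ.face hβτ, by have := hδ.dim_add_one; omega, (hlt.trans hδ.lt).le⟩
    rw [tameModification_of_not_violatesTameness hτ,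
      tameModification_of_not_violatesTameness hβ]
    exact hlt

include hF hη hgap in
theorem tameModification_le_iff (hgen : IsGeneric X F) {β τ : X.Cell} (hβτ : X.face β τ)
    (hd : X.dim β + 1 = X.dim τ) :
    X.tameModification F η τ ≤ X.tameModification F η β ↔ F τ ≤ F β := by
  rcases (hgen hβτ).lt_or_gt with hlt | hgt
  · exact iff_of_false (tameModification_lt_of_facet_of_lt hF hη hgap hβτ hlt).not_ge
      hlt.not_ge
  · exact iff_of_true (tameModification_lt_of_facet_of_gt hF hη hβτ hd hgt).le hgt.le

include hF hη hgap in
theorem isGeneric_tameModification (hgen : IsGeneric X F) :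
    IsGeneric X (X.tameModification F η) := by
  intro α β hαβ
  rcases (show X.dim α + 1 = X.dim β ∨ X.dim α + 2 ≤ X.dim β by
      have := X.face_dim hαβ; omega) with hd | hd
  · rcases (hgen hαβ).lt_or_gt with hlt | hgt
    · exact (tameModification_lt_of_facet_of_lt hF hη hgap hαβ hlt).ne
    · exact (tameModification_lt_of_facet_of_gt hF hη hαβ hd hgt).ne'
  · exact (isTame_tameModification hF hη hgap hαβ hd).ne

end

end RegularCellComplex

/-- Lemma 3.2: Every generic discrete Morse function `F` on a finite
regular cell complex can be modified to a tame generic discrete Morse function `F'` with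
exactly the same critical cells; moreover `F'` agrees with `F` on every cell `β` that
does not appear as the top of a tameness-violating pair of `F`. -/
theorem stmt10 (X : RegularCellComplex) (F : X.Cell → ℝ)
    (hF : IsDiscreteMorse X F) (hgen : IsGeneric X F) :
    ∃ F' : X.Cell → ℝ,
      IsDiscreteMorse X F' ∧ IsGeneric X F' ∧ IsTame X F' ∧
      (∀ α, IsCritical X F' α ↔ IsCritical X F α) ∧
      (∀ β, (∀ α, X.face α β → X.dim α + 2 ≤ X.dim β → F α < F β) → F' β = F β) := by
  obtain ⟨η, hη, hgap⟩ := exists_pos_add_lt_of_lt F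
  have hfacet {β τ : X.Cell} := X.tameModification_le_iff (β := β) (τ := τ) hF hη hgap hgen
  refine ⟨X.tameModification F η, X.isDiscreteMorse_of_facet_le_iff hfacet hF,
    X.isGeneric_tameModification hF hη hgap hgen, X.isTame_tameModification hF hη hgap,
    X.isCritical_iff_of_facet_le_iff hfacet, fun β hβ => ?_⟩
  exact X.tameModification_of_not_violatesTameness fun ⟨α, hαβ, hd, hle⟩ =>
    (hβ α hαβ hd).not_ge hle
end
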